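/- arXiv:1512.01022 — 4 statements merged into one kernel-verified Lean document; each statement's English description precedes it below -/
import Mathlib

section
/- Let (Δ_i)_{i≥1} be pairwise uncorrelated square-integrable random variables with E[Δ_i] = E[Y_i] − E[Y_{i−1}] (where E[Y_0] = 0 and E[Y_i] → E[Y]), and let (p_i)_{i≥1} be a probability distribution with p_i > 0 for all i and ∑_{i≥1} E[Δ_i²]/p_i < ∞. If R is a random index independent of (Δ_i) with P(R = i) = p_i, then the single-term estimator Z = Δ_R / p_R satisfies E[Z] = E[Y] and E[Z²] = ∑_{i≥1} E[Δ_i²]/p_i. -/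
/-!
Split `Ω` along the fibres `{R = i}`. On each fibre `Z = Δ_i / p_i`, and since `{R = i}` is
independent of `Δ_i` and has probability `p_i`, the fibre contributes `E[Δ_i]` to `E[Z]` and
`E[Δ_i²] / p_i` to `E[Z²]`. Summability of the latter makes `Z²`, hence `Z`, integrable, so both
moments are the sums of the fibre contributions; the first sum telescopes to `lim E[Y_i] = E[Y]`.
-/

open MeasureTheory ProbabilityTheory Filter Topology

lemma HasSum.eq_of_tendsto_of_sub {G : Type*} [AddCommGroup G] [TopologicalSpace G]
    [IsTopologicalAddGroup G] [T2Space G] {a : ℕ → G} {s L : G}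
    (hs : HasSum (fun i => a (i + 1) - a i) s) (h0 : a 0 = 0) (hL : Tendsto a atTop (𝓝 L)) :
    s = L := by
  have h := hs.tendsto_sum_nat
  simp_rw [Finset.sum_range_sub, h0, sub_zero] at h
  exact tendsto_nhds_unique h hL

section Fiber

variable {Ω ι E : Type*} {R : Ω → ι} {f : ι → Ω → E}

lemma iUnion_preimage_singleton (R : Ω → ι) : ⋃ i, R ⁻¹' {i} = Set.univ := by
  rw [← Set.preimage_iUnion, Set.iUnion_of_singleton, Set.preimage_univ]

lemma eqOn_preimage_singleton (i : ι) : Set.EqOn (fun ω => f (R ω) ω) (f i) (R ⁻¹' {i}) := by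
  rintro ω (rfl : R ω = i)
  rfl

variable [MeasurableSpace Ω] {μ : Measure Ω} [MeasurableSpace ι] [MeasurableSingletonClass ι]
  [NormedAddCommGroup E]

lemma setIntegral_fiber [NormedSpace ℝ E] (hR : Measurable R) (i : ι) :
    ∫ ω in R ⁻¹' {i}, f (R ω) ω ∂μ = ∫ ω in R ⁻¹' {i}, f i ω ∂μ :=
  setIntegral_congr_fun (hR (measurableSet_singleton i)) (eqOn_preimage_singleton i)

variable [Countable ι]

lemma aestronglyMeasurable_comp_fiber (hR : Measurable R)
    (hf : ∀ i, AEStronglyMeasurable (f i) μ) : AEStronglyMeasurable (fun ω => f (R ω) ω) μ := by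
  rw [← Measure.restrict_univ (μ := μ), ← iUnion_preimage_singleton R,
    aestronglyMeasurable_iUnion_iff]
  intro i
  refine (hf i).restrict.congr ?_
  exact ae_restrict_of_forall_mem (hR (measurableSet_singleton i))
    fun ω hω => (eqOn_preimage_singleton i hω).symm

lemma integrable_comp_fiber (hR : Measurable R) (hf : ∀ i, Integrable (f i) μ)
    (hsum : Summable fun i => ∫ ω in R ⁻¹' {i}, ‖f i ω‖ ∂μ) :
    Integrable (fun ω => f (R ω) ω) μ := by
  rw [← integrableOn_univ, ← iUnion_preimage_singleton R]
  refine integrableOn_iUnion_of_summable_integral_norm (fun i => ?_) ?_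
  · exact (hf i).integrableOn.congr_fun (eqOn_preimage_singleton i).symm
      (hR (measurableSet_singleton i))
  · simpa only [setIntegral_fiber (f := fun i ω => ‖f i ω‖) hR] using hsum

lemma hasSum_setIntegral_fiber [NormedSpace ℝ E] (hR : Measurable R)
    (hf : Integrable (fun ω => f (R ω) ω) μ) :
    HasSum (fun i => ∫ ω in R ⁻¹' {i}, f i ω ∂μ) (∫ ω, f (R ω) ω ∂μ) := by
  have h := hasSum_integral_iUnion (fun i => hR (measurableSet_singleton i))
    (pairwise_disjoint_fiber R) hf.integrableOn
  rwa [iUnion_preimage_singleton, setIntegral_univ, funext (setIntegral_fiber hR)] at h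

end Fiber

lemma ProbabilityTheory.IndepFun.setIntegral_preimage_eq_mul {Ω β γ : Type*}
    [MeasurableSpace Ω] {μ : Measure Ω} [MeasurableSpace β] [MeasurableSpace γ] {R : Ω → β}
    {X : Ω → γ} (h : IndepFun R X μ)
    (hR : Measurable R) (hX : AEMeasurable X μ) {s : Set β} (hs : MeasurableSet s) {g : γ → ℝ}
    (hg : AEStronglyMeasurable g (μ.map X)) :
    ∫ ω in R ⁻¹' s, g (X ω) ∂μ = μ.real (R ⁻¹' s) * ∫ ω, g (X ω) ∂μ :=
  ((IndepFun_iff_Indep R X μ).1 h).setIntegral_eq_mul hR.comap_le hX ⟨s, hs, rfl⟩ hg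

/-- Indexing is shifted: `Δ i` and `p i` are the paper's `Δ_{i+1}` and `p_{i+1}`. -/
theorem single_term_estimator_general
    {Ω : Type*} [MeasurableSpace Ω] (μ : Measure Ω) [IsProbabilityMeasure μ]
    (Y : Ω → ℝ) (Yseq : ℕ → Ω → ℝ) (Δ : ℕ → Ω → ℝ) (p : ℕ → ℝ) (R : Ω → ℕ)
    (hY0 : ∫ ω, Yseq 0 ω ∂μ = 0)
    (hYlim : Tendsto (fun i => ∫ ω, Yseq i ω ∂μ) atTop (nhds (∫ ω, Y ω ∂μ)))
    (hΔsq : ∀ i, MemLp (Δ i) 2 μ)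
    (hΔmean : ∀ i, ∫ ω, Δ i ω ∂μ = (∫ ω, Yseq (i + 1) ω ∂μ) - ∫ ω, Yseq i ω ∂μ)
    (hp : ∀ i, 0 < p i)
    (hsum : Summable (fun i => (∫ ω, Δ i ω ^ 2 ∂μ) / p i))
    (hRmeas : Measurable R)
    (hRdist : ∀ i, μ {ω | R ω = i} = ENNReal.ofReal (p i))
    (hindep : IndepFun R (fun ω => fun i => Δ i ω) μ) :
    (∫ ω, Δ (R ω) ω / p (R ω) ∂μ = ∫ ω, Y ω ∂μ) ∧
      (∫ ω, (Δ (R ω) ω / p (R ω)) ^ 2 ∂μ = ∑' i, (∫ ω, Δ i ω ^ 2 ∂μ) / p i) := by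
  have hfiber : ∀ i (g : ℝ → ℝ), Measurable g →
      ∫ ω in R ⁻¹' {i}, g (Δ i ω) ∂μ = p i * ∫ ω, g (Δ i ω) ∂μ := fun i g hg => by
    have hRΔ : IndepFun R (Δ i) μ := hindep.comp measurable_id (measurable_pi_apply i)
    have hRi : μ.real (R ⁻¹' {i}) = p i :=
      (congrArg ENNReal.toReal (hRdist i)).trans (ENNReal.toReal_ofReal (hp i).le)
    rw [hRΔ.setIntegral_preimage_eq_mul hRmeas (hΔsq i).aestronglyMeasurable.aemeasurable
      (measurableSet_singleton i) hg.aestronglyMeasurable, hRi]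
  have hmean_fiber : ∀ i, ∫ ω in R ⁻¹' {i}, Δ i ω / p i ∂μ = ∫ ω, Δ i ω ∂μ := fun i => by
    rw [hfiber i (· / p i) (by fun_prop), integral_div, mul_div_cancel₀ _ (hp i).ne']
  have hsq_fiber : ∀ i, ∫ ω in R ⁻¹' {i}, (Δ i ω / p i) ^ 2 ∂μ = (∫ ω, Δ i ω ^ 2 ∂μ) / p i :=
    fun i => by
      rw [hfiber i (fun x => (x / p i) ^ 2) (by fun_prop)]
      simp_rw [div_pow, integral_div]
      field_simp [(hp i).ne']
  have hZsq : Integrable (fun ω => (Δ (R ω) ω / p (R ω)) ^ 2) μ := by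
    refine integrable_comp_fiber (f := fun i ω => (Δ i ω / p i) ^ 2) hRmeas
      (fun i => ((hΔsq i).integrable_sq.div_const (p i ^ 2)).congr ?_) ?_
    · exact .of_forall fun ω => (div_pow _ _ _).symm
    · simpa only [Real.norm_eq_abs, abs_sq, hsq_fiber] using hsum
  have hZ : Integrable (fun ω => Δ (R ω) ω / p (R ω)) μ :=
    ((memLp_two_iff_integrable_sq (aestronglyMeasurable_comp_fiber (f := fun i ω => Δ i ω / p i)
      hRmeas fun i => (((hΔsq i).integrable one_le_two).div_const _).1)).2 hZsq).integrable
      one_le_two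
  refine ⟨?_, ?_⟩
  · refine HasSum.eq_of_tendsto_of_sub ?_ hY0 hYlim
    simpa only [hmean_fiber, hΔmean] using
      hasSum_setIntegral_fiber (f := fun i ω => Δ i ω / p i) hRmeas hZ
  · simpa only [hsq_fiber] using
      (hasSum_setIntegral_fiber (f := fun i ω => (Δ i ω / p i) ^ 2) hRmeas hZsq).tsum_eq.symm

/-- Single term estimator (Rhee–Glynn): `Z = Δ_R / p_R` is unbiased for `E Y` and its
second moment is `∑ E[Δ_i²]/p_i`. Indexing: Lean index `i : ℕ` corresponds to the
paper's level `i+1`, so `Δ i` has mean `E[Y (i+1)] - E[Y i]` and `E[Y 0] = 0`. -/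
theorem single_term_estimator
    {Ω : Type*} [MeasurableSpace Ω] (μ : Measure Ω) [IsProbabilityMeasure μ]
    (Y : Ω → ℝ) (Yseq : ℕ → Ω → ℝ) (Δ : ℕ → Ω → ℝ) (p : ℕ → ℝ) (R : Ω → ℕ)
    (hYint : Integrable Y μ) (hYiint : ∀ i, Integrable (Yseq i) μ)
    (hY0 : ∫ ω, Yseq 0 ω ∂μ = 0)
    (hYlim : Tendsto (fun i => ∫ ω, Yseq i ω ∂μ) atTop (nhds (∫ ω, Y ω ∂μ)))
    (hΔmeas : ∀ i, Measurable (Δ i))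
    (hΔsq : ∀ i, MemLp (Δ i) 2 μ)
    (hΔmean : ∀ i, ∫ ω, Δ i ω ∂μ = (∫ ω, Yseq (i + 1) ω ∂μ) - ∫ ω, Yseq i ω ∂μ)
    (huncorr : ∀ i k, i ≠ k →
      ∫ ω, Δ i ω * Δ k ω ∂μ = (∫ ω, Δ i ω ∂μ) * ∫ ω, Δ k ω ∂μ)
    (hp : ∀ i, 0 < p i) (hp1 : ∑' i, p i = 1)
    (hsum : Summable (fun i => (∫ ω, Δ i ω ^ 2 ∂μ) / p i))
    (hRmeas : Measurable R)
    (hRdist : ∀ i, μ {ω | R ω = i} = ENNReal.ofReal (p i))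
    (hindep : IndepFun R (fun ω => fun i => Δ i ω) μ) :
    (∫ ω, Δ (R ω) ω / p (R ω) ∂μ = ∫ ω, Y ω ∂μ) ∧
      (∫ ω, (Δ (R ω) ω / p (R ω)) ^ 2 ∂μ = ∑' i, (∫ ω, Δ i ω ^ 2 ∂μ) / p i) :=
  single_term_estimator_general μ Y Yseq Δ p R hY0 hYlim hΔsq hΔmean hp hsum hRmeas hRdist hindep
end

section
/- Let (Δ_i)_{i≥1} be square-integrable random variables, (Δ_i^{(j)})_{i≥1}, j ≥ 1, independent copies of the process (Δ_i)_{i≥1}, and (N_i)_{i≥1} square-integrable nonnegative integer random variables independent of all Δ_i^{(j)} with E[N_i] > 0. For m ≥ 1 define the partial-sum estimator Z_m = ∑_{i=1}^m (E[N_i])^{-1} ∑_{j=1}^{N_i} Δ_i^{(j)}. Then for all 0 ≤ ℓ < m, E[(Z_m − Z_ℓ)²] = v_{ℓ,m} + (E[Y_m] − E[Y_ℓ])², where v_{ℓ,m} = ∑_{i,k=ℓ+1}^m [Cov(Δ_i, Δ_k) E[N_i ∧ N_k] + E[Δ_i] E[Δ_k] Cov(N_i, N_k)] / (E[N_i] E[N_k]),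 and E[Y_m] := ∑_{i=1}^m E[Δ_i]. -/
/-!
Expanding the square reduces the claim to the mixed moments `E[S_i S_k]` of the random sums
`S_i = ∑_{j < N_i} Δ_i^{(j)}`. For deterministic counts `a, b`, the `a b` products
`Δ_i^{(j)} Δ_k^{(j')}` have mean `E[Δ_i Δ_k]` on the `min a b` diagonal pairs and
`E[Δ_i] E[Δ_k]` off the diagonal, since distinct copies are independent. As the counts are
independent of the copies, Fubini on the product of their laws lets one integrate out the copies
first, giving `E[S_i S_k] = E[Δ_i Δ_k] E[N_i ∧ N_k] + E[Δ_i] E[Δ_k] (E[N_i N_k] - E[N_i ∧ N_k])`;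
dividing by `E[N_i] E[N_k]` and summing over `i, k` yields the identity.
-/

open MeasureTheory ProbabilityTheory

/-- The quantity `v_{ℓ,m}` from the general unbiased scheme (sum over levels
`ℓ+1, …, m` of the paper, i.e. Lean indices in `Finset.Ico ℓ m`). -/
noncomputable def vlm {Ω : Type*} [MeasurableSpace Ω] (μ : Measure Ω)
    (Δ : ℕ → Ω → ℝ) (N : ℕ → Ω → ℕ) (ℓ m : ℕ) : ℝ :=
  ∑ i ∈ Finset.Ico ℓ m, ∑ k ∈ Finset.Ico ℓ m,
    (((∫ ω, Δ i ω * Δ k ω ∂μ) - (∫ ω, Δ i ω ∂μ) * ∫ ω, Δ k ω ∂μ)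
        * (∫ ω, (min (N i ω) (N k ω) : ℝ) ∂μ)
      + (∫ ω, Δ i ω ∂μ) * (∫ ω, Δ k ω ∂μ)
        * ((∫ ω, (N i ω : ℝ) * (N k ω : ℝ) ∂μ)
            - (∫ ω, (N i ω : ℝ) ∂μ) * ∫ ω, (N k ω : ℝ) ∂μ))
    / ((∫ ω, (N i ω : ℝ) ∂μ) * ∫ ω, (N k ω : ℝ) ∂μ)

open Finset

lemma sum_range_sum_range_ite_eq (a b : ℕ) (A B : ℝ) :
    ∑ j ∈ range a, ∑ j' ∈ range b, (if j = j' then A else B)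
      = (min a b : ℝ) * A + ((a : ℝ) * b - (min a b : ℝ)) * B := by
  have hsplit : ∀ j j' : ℕ, (if j = j' then A else B) = B + if j = j' then A - B else 0 := by
    intro j j'; split_ifs <;> ring
  have hdiag : ∑ j ∈ range a, (if j ∈ range b then A - B else 0) = (min a b : ℝ) * (A - B) := by
    rw [sum_ite_mem, range_inter_range, sum_const, card_range, nsmul_eq_mul, Nat.cast_min]
  simp only [hsplit, sum_add_distrib, sum_const, card_range, sum_ite_eq, nsmul_eq_mul, hdiag]
  ring

section IndepFubini

variable {Ω α β E : Type*} [MeasurableSpace Ω] [MeasurableSpace α] [MeasurableSpace β]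
  [NormedAddCommGroup E] {μ : Measure Ω} [IsFiniteMeasure μ]
  {Y : Ω → α} {Z : Ω → β} {F : α × β → E}

lemma integrable_prod_map_of_integral_norm_le (hY : Measurable Y) (hZ : Measurable Z)
    (hF : StronglyMeasurable F) (hsec : ∀ a, Integrable (fun ω => F (a, Z ω)) μ)
    {g : α → ℝ} (hg : Measurable g) (hgY : Integrable (fun ω => g (Y ω)) μ)
    (hFg : ∀ a, ∫ ω, ‖F (a, Z ω)‖ ∂μ ≤ g a) :
    Integrable F ((μ.map Y).prod (μ.map Z)) := by
  rw [integrable_prod_iff hF.aestronglyMeasurable]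
  refine ⟨Filter.Eventually.of_forall fun a => ?_, ?_⟩
  · exact (integrable_map_measure (hF.comp_measurable measurable_prodMk_left).aestronglyMeasurable
      hZ.aemeasurable).mpr (hsec a)
  · refine Integrable.mono'
      ((integrable_map_measure hg.aestronglyMeasurable hY.aemeasurable).mpr hgY)
      hF.norm.aestronglyMeasurable.integral_prod_right' (Filter.Eventually.of_forall fun a => ?_)
    rw [Real.norm_of_nonneg (integral_nonneg fun _ => norm_nonneg _),
      integral_map (f := fun b => ‖F (a, b)‖) hZ.aemeasurable
        (hF.comp_measurable measurable_prodMk_left).norm.aestronglyMeasurable]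
    exact hFg a

namespace ProbabilityTheory.IndepFun

lemma integrable_comp_prod (hYZ : IndepFun Y Z μ) (hY : Measurable Y) (hZ : Measurable Z)
    (hF : Integrable F ((μ.map Y).prod (μ.map Z))) :
    Integrable (fun ω => F (Y ω, Z ω)) μ := by
  rw [← (indepFun_iff_map_prod_eq_prod_map_map hY.aemeasurable hZ.aemeasurable).mp hYZ] at hF
  exact hF.comp_measurable (hY.prodMk hZ)

lemma integral_comp_prod [NormedSpace ℝ E] [CompleteSpace E] (hYZ : IndepFun Y Z μ)
    (hY : Measurable Y) (hZ : Measurable Z) (hFm : StronglyMeasurable F)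
    (hF : Integrable F ((μ.map Y).prod (μ.map Z))) :
    ∫ ω, F (Y ω, Z ω) ∂μ = ∫ ω, ∫ ω', F (Y ω, Z ω') ∂μ ∂μ := by
  have hmap := (indepFun_iff_map_prod_eq_prod_map_map hY.aemeasurable hZ.aemeasurable).mp hYZ
  rw [← integral_map (hY.prodMk hZ).aemeasurable (hmap ▸ hF.aestronglyMeasurable), hmap,
    integral_prod F hF, integral_map hY.aemeasurable hFm.integral_prod_right'.aestronglyMeasurable]
  congr 1 with a
  exact integral_map hZ.aemeasurable
    (hFm.comp_measurable measurable_prodMk_left).aestronglyMeasurable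

end ProbabilityTheory.IndepFun

end IndepFubini

section IIDCopies

variable {Ω ι : Type*} [MeasurableSpace Ω] {μ : Measure Ω}
  {Δ : ι → Ω → ℝ} {Δc : ι → ℕ → Ω → ℝ}

lemma integral_copy_mul_copy
    (hcopies : ∀ j, IdentDistrib (fun ω i => Δc i j ω) (fun ω i => Δ i ω) μ μ)
    (hcopyindep : iIndepFun (fun j ω i => Δc i j ω) μ) (i k : ι) (j j' : ℕ) :
    ∫ ω, Δc i j ω * Δc k j' ω ∂μ
      = if j = j' then ∫ ω, Δ i ω * Δ k ω ∂μ else (∫ ω, Δ i ω ∂μ) * ∫ ω, Δ k ω ∂μ := by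
  have hcopy : ∀ i j, IdentDistrib (Δc i j) (Δ i) μ μ := fun i j =>
    (hcopies j).comp (measurable_pi_apply i)
  split_ifs with hjj'
  · subst hjj'
    exact ((hcopies j).comp ((measurable_pi_apply i).mul (measurable_pi_apply k))).integral_eq
  · have hind : IndepFun (Δc i j) (Δc k j') μ :=
      (hcopyindep.indepFun hjj').comp (measurable_pi_apply i) (measurable_pi_apply k)
    rw [← (hcopy i j).integral_eq, ← (hcopy k j').integral_eq]
    exact hind.integral_mul_eq_mul_integral (hcopy i j).aemeasurable_fst.aestronglyMeasurable
      (hcopy k j').aemeasurable_fst.aestronglyMeasurable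

lemma integrable_sum_copies_mul_sum_copies
    (hcopies : ∀ j, IdentDistrib (fun ω i => Δc i j ω) (fun ω i => Δ i ω) μ μ)
    (hΔsq : ∀ i, MemLp (Δ i) 2 μ) (i k : ι) (a b : ℕ) :
    Integrable (fun ω => (∑ j ∈ range a, Δc i j ω) * ∑ j ∈ range b, Δc k j ω) μ := by
  have hsq : ∀ i j, MemLp (Δc i j) 2 μ := fun i j =>
    ((hcopies j).comp (measurable_pi_apply i)).symm.memLp_snd (hΔsq i)
  simp_rw [sum_mul_sum]
  exact integrable_finsetSum _ fun j _ => integrable_finsetSum _ fun j' _ =>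
    (hsq i j).integrable_mul (hsq k j')

lemma integral_sum_copies_mul_sum_copies
    (hcopies : ∀ j, IdentDistrib (fun ω i => Δc i j ω) (fun ω i => Δ i ω) μ μ)
    (hcopyindep : iIndepFun (fun j ω i => Δc i j ω) μ)
    (hΔsq : ∀ i, MemLp (Δ i) 2 μ) (i k : ι) (a b : ℕ) :
    ∫ ω, (∑ j ∈ range a, Δc i j ω) * (∑ j ∈ range b, Δc k j ω) ∂μ
      = (min a b : ℝ) * ∫ ω, Δ i ω * Δ k ω ∂μ
        + ((a : ℝ) * b - (min a b : ℝ)) * ((∫ ω, Δ i ω ∂μ) * ∫ ω, Δ k ω ∂μ) := by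
  have hsq : ∀ i j, MemLp (Δc i j) 2 μ := fun i j =>
    ((hcopies j).comp (measurable_pi_apply i)).symm.memLp_snd (hΔsq i)
  simp_rw [sum_mul_sum]
  have hint : ∀ j j', Integrable (fun ω => Δc i j ω * Δc k j' ω) μ := fun j j' =>
    (hsq i j).integrable_mul (hsq k j')
  rw [integral_finsetSum _ fun j _ => integrable_finsetSum _ fun j' _ => hint j j']
  simp_rw [integral_finsetSum _ fun j' _ => hint _ j', integral_copy_mul_copy hcopies hcopyindep]
  exact sum_range_sum_range_ite_eq a b _ _

end IIDCopies

section RandomSums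

variable {Ω ι : Type*} [MeasurableSpace Ω] {μ : Measure Ω}
  {Δ : ι → Ω → ℝ} {Δc : ι → ℕ → Ω → ℝ} {N : ι → Ω → ℕ}

/-- `S_i S_k` as a function of the pair (counts, array of copies), so that Fubini over the
product of their laws applies when the two are independent. -/
def sumRangeMulSumRange (i k : ι) (p : (ι → ℕ) × (ι × ℕ → ℝ)) : ℝ :=
  (∑ j ∈ range (p.1 i), p.2 (i, j)) * ∑ j ∈ range (p.1 k), p.2 (k, j)

lemma measurable_sumRangeMulSumRange (i k : ι) : Measurable (sumRangeMulSumRange i k) := by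
  have hsum : ∀ l : ι, Measurable fun p : (ι → ℕ) × (ι × ℕ → ℝ) =>
      ∑ j ∈ range (p.1 l), p.2 (l, j) := by
    intro l
    have hsum_count : Measurable fun q : (ι × ℕ → ℝ) × ℕ => ∑ j ∈ range q.2, q.1 (l, j) :=
      measurable_from_prod_countable_left fun n =>
        Finset.measurable_sum (range n) fun j _ => measurable_pi_apply (l, j)
    exact hsum_count.comp (measurable_snd.prodMk ((measurable_pi_apply l).comp measurable_fst))
  exact (hsum i).mul (hsum k)

lemma integrable_min_natCast [IsFiniteMeasure μ] (hNsq : ∀ i, MemLp (fun ω => (N i ω : ℝ)) 2 μ)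
    (i k : ι) : Integrable (fun ω => min (N i ω : ℝ) (N k ω)) μ :=
  ((hNsq i).integrable one_le_two).inf ((hNsq k).integrable one_le_two)

lemma integrable_sumRangeMulSumRange [IsFiniteMeasure μ]
    (hcopies : ∀ j, IdentDistrib (fun ω i => Δc i j ω) (fun ω i => Δ i ω) μ μ)
    (hcopyindep : iIndepFun (fun j ω i => Δc i j ω) μ) (hΔsq : ∀ i, MemLp (Δ i) 2 μ)
    (hΔcmeas : ∀ i j, Measurable (Δc i j)) (hNmeas : ∀ i, Measurable (N i))
    (hNsq : ∀ i, MemLp (fun ω => (N i ω : ℝ)) 2 μ) (i k : ι) :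
    Integrable (sumRangeMulSumRange i k)
      ((μ.map fun ω i => N i ω).prod (μ.map fun ω (q : ι × ℕ) => Δc q.1 q.2 ω)) := by
  -- `|Δc|` is again an array of i.i.d. copies, of `|Δ|`: its moment formula
  -- bounds the integral of `|sumRangeMulSumRange i k (n, ·)|`.
  set A := ∫ ω, |Δ i ω| * |Δ k ω| ∂μ
  set B := (∫ ω, |Δ i ω| ∂μ) * ∫ ω, |Δ k ω| ∂μ
  have habs_copies : ∀ j, IdentDistrib (fun ω i => |Δc i j ω|) (fun ω i => |Δ i ω|) μ μ :=
    fun j => (hcopies j).comp (measurable_pi_lambda _ fun i => (measurable_pi_apply i).abs)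
  have habs_indep : iIndepFun (fun j ω i => |Δc i j ω|) μ :=
    hcopyindep.comp (fun _ x i => |x i|)
      fun _ => measurable_pi_lambda _ fun i => (measurable_pi_apply i).abs
  refine integrable_prod_map_of_integral_norm_le (measurable_pi_lambda _ hNmeas)
    (measurable_pi_lambda _ fun q => hΔcmeas q.1 q.2)
    (measurable_sumRangeMulSumRange i k).stronglyMeasurable
    (fun n => integrable_sum_copies_mul_sum_copies hcopies hΔsq i k (n i) (n k))
    (g := fun n => (min (n i : ℝ) (n k)) * A + ((n i : ℝ) * n k - min (n i : ℝ) (n k)) * B)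
    (by fun_prop) ?_ fun n => ?_
  · exact ((integrable_min_natCast hNsq i k).mul_const A).add
      ((((hNsq i).integrable_mul (hNsq k)).sub (integrable_min_natCast hNsq i k)).mul_const B)
  · rw [← integral_sum_copies_mul_sum_copies habs_copies habs_indep (fun i => (hΔsq i).abs)]
    refine integral_mono (integrable_sum_copies_mul_sum_copies hcopies hΔsq i k _ _).norm
      (integrable_sum_copies_mul_sum_copies habs_copies (fun i => (hΔsq i).abs) i k _ _)
      fun ω => ?_
    rw [Real.norm_eq_abs, sumRangeMulSumRange, abs_mul]
    exact mul_le_mul (abs_sum_le_sum_abs _ _) (abs_sum_le_sum_abs _ _) (abs_nonneg _)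
      (sum_nonneg fun _ _ => abs_nonneg _)

lemma integrable_randomSum_mul_randomSum [IsFiniteMeasure μ]
    (hcopies : ∀ j, IdentDistrib (fun ω i => Δc i j ω) (fun ω i => Δ i ω) μ μ)
    (hcopyindep : iIndepFun (fun j ω i => Δc i j ω) μ) (hΔsq : ∀ i, MemLp (Δ i) 2 μ)
    (hΔcmeas : ∀ i j, Measurable (Δc i j)) (hNmeas : ∀ i, Measurable (N i))
    (hNsq : ∀ i, MemLp (fun ω => (N i ω : ℝ)) 2 μ)
    (hNindep : IndepFun (fun ω i => N i ω) (fun ω (q : ι × ℕ) => Δc q.1 q.2 ω) μ) (i k : ι) :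
    Integrable (fun ω => (∑ j ∈ range (N i ω), Δc i j ω) * ∑ j ∈ range (N k ω), Δc k j ω) μ :=
  hNindep.integrable_comp_prod (measurable_pi_lambda _ hNmeas)
    (measurable_pi_lambda _ fun q => hΔcmeas q.1 q.2)
    (integrable_sumRangeMulSumRange hcopies hcopyindep hΔsq hΔcmeas hNmeas hNsq i k)

lemma integral_randomSum_mul_randomSum [IsFiniteMeasure μ]
    (hcopies : ∀ j, IdentDistrib (fun ω i => Δc i j ω) (fun ω i => Δ i ω) μ μ)
    (hcopyindep : iIndepFun (fun j ω i => Δc i j ω) μ) (hΔsq : ∀ i, MemLp (Δ i) 2 μ)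
    (hΔcmeas : ∀ i j, Measurable (Δc i j)) (hNmeas : ∀ i, Measurable (N i))
    (hNsq : ∀ i, MemLp (fun ω => (N i ω : ℝ)) 2 μ)
    (hNindep : IndepFun (fun ω i => N i ω) (fun ω (q : ι × ℕ) => Δc q.1 q.2 ω) μ) (i k : ι) :
    ∫ ω, (∑ j ∈ range (N i ω), Δc i j ω) * (∑ j ∈ range (N k ω), Δc k j ω) ∂μ
      = (∫ ω, Δ i ω * Δ k ω ∂μ) * (∫ ω, min (N i ω : ℝ) (N k ω) ∂μ)
        + (∫ ω, Δ i ω ∂μ) * (∫ ω, Δ k ω ∂μ)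
          * ((∫ ω, (N i ω : ℝ) * N k ω ∂μ) - ∫ ω, min (N i ω : ℝ) (N k ω) ∂μ) := by
  have hmin := integrable_min_natCast hNsq i k
  have hprod : Integrable (fun ω => (N i ω : ℝ) * N k ω) μ := (hNsq i).integrable_mul (hNsq k)
  change ∫ ω, sumRangeMulSumRange i k ((fun ω i => N i ω) ω, (fun ω q => Δc q.1 q.2 ω) ω) ∂μ = _
  rw [hNindep.integral_comp_prod (measurable_pi_lambda _ hNmeas)
    (measurable_pi_lambda _ fun q => hΔcmeas q.1 q.2)
    (measurable_sumRangeMulSumRange i k).stronglyMeasurable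
    (integrable_sumRangeMulSumRange hcopies hcopyindep hΔsq hΔcmeas hNmeas hNsq i k)]
  simp only [sumRangeMulSumRange, integral_sum_copies_mul_sum_copies hcopies hcopyindep hΔsq]
  rw [integral_add (hmin.mul_const _) ?_, integral_mul_const,
    integral_mul_const, integral_sub hprod hmin]
  · ring
  · exact (hprod.sub hmin).mul_const _

end RandomSums

theorem general_scheme_second_moment_general
    {Ω : Type*} [MeasurableSpace Ω] (μ : Measure Ω) [IsProbabilityMeasure μ]
    (Δ : ℕ → Ω → ℝ) (Δc : ℕ → ℕ → Ω → ℝ) (N : ℕ → Ω → ℕ)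
    (hΔsq : ∀ i, MemLp (Δ i) 2 μ)
    (hΔcmeas : ∀ i j, Measurable (Δc i j))
    (hcopies : ∀ j, IdentDistrib (fun ω => fun i => Δc i j ω)
      (fun ω => fun i => Δ i ω) μ μ)
    (hcopyindep : iIndepFun
      (fun j => fun ω => fun i => Δc i j ω) μ)
    (hNmeas : ∀ i, Measurable (N i))
    (hNsq : ∀ i, MemLp (fun ω => (N i ω : ℝ)) 2 μ)
    (hNpos : ∀ i, 0 < ∫ ω, (N i ω : ℝ) ∂μ)
    (hNindep : IndepFun (fun ω => fun i => N i ω)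
      (fun ω => fun q : ℕ × ℕ => Δc q.1 q.2 ω) μ) :
    ∀ ℓ m : ℕ, ℓ < m →
      ∫ ω, ((∑ i ∈ Finset.range m, (∫ ω', (N i ω' : ℝ) ∂μ)⁻¹
              * ∑ j ∈ Finset.range (N i ω), Δc i j ω)
          - ∑ i ∈ Finset.range ℓ, (∫ ω', (N i ω' : ℝ) ∂μ)⁻¹
              * ∑ j ∈ Finset.range (N i ω), Δc i j ω) ^ 2 ∂μ
        = vlm μ Δ N ℓ m + (∑ i ∈ Finset.Ico ℓ m, ∫ ω, Δ i ω ∂μ) ^ 2 := by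
  intro ℓ m hℓm
  set S : ℕ → Ω → ℝ := fun i ω => ∑ j ∈ range (N i ω), Δc i j ω
  have hS := integrable_randomSum_mul_randomSum hcopies hcopyindep hΔsq hΔcmeas hNmeas hNsq hNindep
  have hsq : ∀ ω, ((∑ i ∈ range m, (∫ ω', (N i ω' : ℝ) ∂μ)⁻¹ * S i ω)
      - ∑ i ∈ range ℓ, (∫ ω', (N i ω' : ℝ) ∂μ)⁻¹ * S i ω) ^ 2
      = ∑ i ∈ Ico ℓ m, ∑ k ∈ Ico ℓ m,
          ((∫ ω', (N i ω' : ℝ) ∂μ)⁻¹ * (∫ ω', (N k ω' : ℝ) ∂μ)⁻¹) * (S i ω * S k ω) := by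
    intro ω
    rw [← sum_Ico_eq_sub _ hℓm.le, sq, sum_mul_sum]
    exact sum_congr rfl fun i _ => sum_congr rfl fun k _ => by ring
  rw [integral_congr_ae (ae_of_all _ hsq),
    integral_finsetSum _ fun i _ => integrable_finsetSum _ fun k _ => (hS i k).const_mul _,
    vlm, sq, sum_mul_sum, ← sum_add_distrib]
  refine sum_congr rfl fun i _ => ?_
  rw [integral_finsetSum _ fun k _ => (hS i k).const_mul _, ← sum_add_distrib]
  refine sum_congr rfl fun k _ => ?_
  rw [integral_const_mul,
    integral_randomSum_mul_randomSum hcopies hcopyindep hΔsq hΔcmeas hNmeas hNsq hNindep]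
  field_simp [(hNpos i).ne', (hNpos k).ne']
  ring

/-- Second-moment identity for the partial sums of the general unbiased scheme:
`E[(Z m − Z ℓ)²] = v_{ℓ,m} + (E[Y m] − E[Y ℓ])²`, where
`Z m = ∑_{i<m} (E N i)⁻¹ ∑_{j<N i} Δ i^{(j)}` and `E[Y m] = ∑_{i<m} E[Δ i]`. -/
theorem general_scheme_second_moment
    {Ω : Type*} [MeasurableSpace Ω] (μ : Measure Ω) [IsProbabilityMeasure μ]
    (Δ : ℕ → Ω → ℝ) (Δc : ℕ → ℕ → Ω → ℝ) (N : ℕ → Ω → ℕ)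
    (hΔmeas : ∀ i, Measurable (Δ i)) (hΔsq : ∀ i, MemLp (Δ i) 2 μ)
    (hΔcmeas : ∀ i j, Measurable (Δc i j))
    (hcopies : ∀ j, IdentDistrib (fun ω => fun i => Δc i j ω)
      (fun ω => fun i => Δ i ω) μ μ)
    (hcopyindep : iIndepFun
      (fun j => fun ω => fun i => Δc i j ω) μ)
    (hNmeas : ∀ i, Measurable (N i))
    (hNsq : ∀ i, MemLp (fun ω => (N i ω : ℝ)) 2 μ)
    (hNpos : ∀ i, 0 < ∫ ω, (N i ω : ℝ) ∂μ)
    (hNindep : IndepFun (fun ω => fun i => N i ω)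
      (fun ω => fun q : ℕ × ℕ => Δc q.1 q.2 ω) μ) :
    ∀ ℓ m : ℕ, ℓ < m →
      ∫ ω, ((∑ i ∈ Finset.range m, (∫ ω', (N i ω' : ℝ) ∂μ)⁻¹
              * ∑ j ∈ Finset.range (N i ω), Δc i j ω)
          - ∑ i ∈ Finset.range ℓ, (∫ ω', (N i ω' : ℝ) ∂μ)⁻¹
              * ∑ j ∈ Finset.range (N i ω), Δc i j ω) ^ 2 ∂μ
        = vlm μ Δ N ℓ m + (∑ i ∈ Finset.Ico ℓ m, ∫ ω, Δ i ω ∂μ) ^ 2 :=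
  general_scheme_second_moment_general μ Δ Δc N hΔsq hΔcmeas hcopies hcopyindep hNmeas hNsq hNpos
    hNindep
end

section
/- For the coupled sum estimator: σ_{Σ,∞}² := ∑_{i≥1} (Var(Y − Y_{i−1}) − Var(Y − Y_i))/p̃_i satisfies σ_{Σ,∞}² = Var(Z_Σ^{(1)}) − ∑_{i≥1} (E[Y] − E[Y_i])² (1/p̃_{i+1} − 1/p̃_i), and every term in the subtracted sum is nonnegative since the tails p̃_i are nonincreasing. -/
/-!
Write `a i = E[(Y_i − Y)²]`, `m i = (E Y − E Y_i)²` and `t i = p̃_{i+1}`, so that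
`Var(Y − Y_i) = a i − m i` and `0 ≤ m i ≤ a i`. The claim is then a summation by parts,
`∑ (m i − m (i+1)) / t i = m 0 / t 0 + ∑ m (i+1) (1/t (i+1) − 1/t i)`, which only needs the
series `∑ m i / t i` and `∑ m (i+1) / t i` to converge; both are dominated by `∑ a i / t i`
because the tails `t` are positive and nonincreasing.
-/

open MeasureTheory ProbabilityTheory

section Series

variable {a m t : ℕ → ℝ}

theorem summable_succ_div_of_antitone (ht : ∀ i, 0 < t i) (ht_succ : ∀ i, t (i + 1) ≤ t i)
    (hm : ∀ i, 0 ≤ m i) (hmt : Summable fun i => m i / t i) :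
    Summable fun i => m (i + 1) / t i :=
  ((summable_nat_add_iff 1).mpr hmt).of_nonneg_of_le
    (fun i => div_nonneg (hm _) (ht i).le)
    (fun i => div_le_div_of_nonneg_left (hm _) (ht _) (ht_succ i))

theorem tsum_sub_succ_div_eq (hmt : Summable fun i => m i / t i)
    (hmt' : Summable fun i => m (i + 1) / t i) :
    ∑' i, (m i - m (i + 1)) / t i
      = m 0 / t 0 + ∑' i, m (i + 1) * (1 / t (i + 1) - 1 / t i) := by
  have hmt_succ : Summable fun i => m (i + 1) / t (i + 1) := (summable_nat_add_iff 1).mpr hmt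
  calc ∑' i, (m i - m (i + 1)) / t i
      = ∑' i, m i / t i - ∑' i, m (i + 1) / t i := by
        simp_rw [sub_div]; exact hmt.tsum_sub hmt'
    _ = m 0 / t 0 + (∑' i, m (i + 1) / t (i + 1) - ∑' i, m (i + 1) / t i) := by
        rw [hmt.tsum_eq_zero_add]; ring
    _ = m 0 / t 0 + ∑' i, m (i + 1) * (1 / t (i + 1) - 1 / t i) := by
        rw [← hmt_succ.tsum_sub hmt']; simp_rw [mul_sub, mul_one_div]

theorem tsum_sub_sub_succ_div_eq (ht : ∀ i, 0 < t i) (ht_succ : ∀ i, t (i + 1) ≤ t i)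
    (hm : ∀ i, 0 ≤ m i) (hma : ∀ i, m i ≤ a i) (hat : Summable fun i => a i / t i) :
    ∑' i, ((a i - m i) - (a (i + 1) - m (i + 1))) / t i
      = (∑' i, (a i - a (i + 1)) / t i - m 0 / t 0)
        - ∑' i, m (i + 1) * (1 / t (i + 1) - 1 / t i) := by
  have ha i : 0 ≤ a i := (hm i).trans (hma i)
  have hmt : Summable fun i => m i / t i :=
    hat.of_nonneg_of_le (fun i => div_nonneg (hm i) (ht i).le)
      (fun i => div_le_div_of_nonneg_right (hma i) (ht i).le)
  have hat' := summable_succ_div_of_antitone ht ht_succ ha hat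
  have hmt' := summable_succ_div_of_antitone ht ht_succ hm hmt
  have hsub_a : Summable fun i => (a i - a (i + 1)) / t i := by
    simp_rw [sub_div]; exact hat.sub hat'
  have hsub_m : Summable fun i => (m i - m (i + 1)) / t i := by
    simp_rw [sub_div]; exact hmt.sub hmt'
  calc ∑' i, ((a i - m i) - (a (i + 1) - m (i + 1))) / t i
      = ∑' i, ((a i - a (i + 1)) / t i - (m i - m (i + 1)) / t i) :=
        tsum_congr fun i => by ring
    _ = ∑' i, (a i - a (i + 1)) / t i - ∑' i, (m i - m (i + 1)) / t i :=
        hsub_a.tsum_sub hsub_m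
    _ = _ := by rw [tsum_sub_succ_div_eq hmt hmt']; ring

end Series

theorem tsum_nat_add_succ_le {p : ℕ → ℝ} (hp : ∀ i, 0 ≤ p i) (hsum : Summable p) (i : ℕ) :
    ∑' j, p (i + 1 + j) ≤ ∑' j, p (i + j) := by
  have htail : Summable fun j => p (i + j) := by
    simpa only [add_comm] using (summable_nat_add_iff i).mpr hsum
  rw [htail.tsum_eq_zero_add]
  simp only [add_right_comm i 1, add_assoc i, le_add_iff_nonneg_left, add_zero, hp]

section Variance

variable {Ω : Type*} [MeasurableSpace Ω] {μ : Measure Ω} {X Z : Ω → ℝ}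

theorem variance_sub_eq [IsProbabilityMeasure μ] (hX : MemLp X 2 μ) (hZ : MemLp Z 2 μ) :
    variance (fun ω => X ω - Z ω) μ
      = ∫ ω, (Z ω - X ω) ^ 2 ∂μ - ((∫ ω, X ω ∂μ) - ∫ ω, Z ω ∂μ) ^ 2 := by
  rw [show (fun ω => X ω - Z ω) = X - Z from rfl, variance_eq_sub (hX.sub hZ)]
  simp only [Pi.sub_apply, Pi.pow_apply]
  rw [integral_sub (hX.integrable one_le_two) (hZ.integrable one_le_two)]
  congr 2
  ext ω
  ring

theorem sq_integral_sub_le [IsProbabilityMeasure μ] (hX : MemLp X 2 μ) (hZ : MemLp Z 2 μ) :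
    ((∫ ω, X ω ∂μ) - ∫ ω, Z ω ∂μ) ^ 2 ≤ ∫ ω, (Z ω - X ω) ^ 2 ∂μ := by
  have := variance_nonneg (fun ω => X ω - Z ω) μ
  rw [variance_sub_eq hX hZ] at this
  linarith

end Variance

/-- Lean index `i` is the paper's level `i + 1`, so `∑' j, p (i + j)` is the paper's `p̃_{i+1}`. -/
theorem sigma_infty_vs_coupled_sum_variance_general
    {Ω : Type*} [MeasurableSpace Ω] (μ : Measure Ω) [IsProbabilityMeasure μ]
    (Ytarget : Ω → ℝ) (Y : ℕ → Ω → ℝ) (p : ℕ → ℝ)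
    (hYt : MemLp Ytarget 2 μ) (hYi : ∀ i, MemLp (Y i) 2 μ)
    (hY0 : Y 0 = fun _ => 0)
    (hp : ∀ i, 0 < p i) (hp1 : ∑' i, p i = 1)
    (hptail : ∀ i, 0 < ∑' j : ℕ, p (i + j))
    (hsum : Summable (fun i =>
      (∫ ω, (Y i ω - Ytarget ω) ^ 2 ∂μ) / ∑' j : ℕ, p (i + j))) :
    (∑' i, (variance (fun ω => Ytarget ω - Y i ω) μ
          - variance (fun ω => Ytarget ω - Y (i + 1) ω) μ) / ∑' j : ℕ, p (i + j))
        = ((∑' i, ((∫ ω, (Y i ω - Ytarget ω) ^ 2 ∂μ)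
              - ∫ ω, (Y (i + 1) ω - Ytarget ω) ^ 2 ∂μ) / ∑' j : ℕ, p (i + j))
            - (∫ ω, Ytarget ω ∂μ) ^ 2)
          - ∑' i, ((∫ ω, Ytarget ω ∂μ) - ∫ ω, Y (i + 1) ω ∂μ) ^ 2
              * (1 / (∑' j : ℕ, p (i + 1 + j)) - 1 / ∑' j : ℕ, p (i + j)) ∧
      ∀ i, 0 ≤ ((∫ ω, Ytarget ω ∂μ) - ∫ ω, Y (i + 1) ω ∂μ) ^ 2
          * (1 / (∑' j : ℕ, p (i + 1 + j)) - 1 / ∑' j : ℕ, p (i + j)) := by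
  have hp_summable : Summable p := by
    by_contra h
    simp [tsum_eq_zero_of_not_summable h] at hp1
  have htail_succ := tsum_nat_add_succ_le (fun i => (hp i).le) hp_summable
  refine ⟨?_, fun i => mul_nonneg (sq_nonneg _)
    (sub_nonneg.2 (one_div_le_one_div_of_le (hptail (i + 1)) (htail_succ i)))⟩
  have htail_zero : ∑' j, p (0 + j) = 1 := by simpa only [zero_add] using hp1
  have hm_zero : ((∫ ω, Ytarget ω ∂μ) - ∫ ω, Y 0 ω ∂μ) ^ 2 = (∫ ω, Ytarget ω ∂μ) ^ 2 := by
    simp [hY0]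
  simp_rw [variance_sub_eq hYt (hYi _)]
  rw [tsum_sub_sub_succ_div_eq hptail htail_succ (fun _ => sq_nonneg _)
    (fun i => sq_integral_sub_le hYt (hYi i)) hsum, htail_zero, hm_zero, div_one]

/-- Limiting per-sample variance of the coupled sum scheme.  Lean index `i` corresponds
to the paper's level `i+1`, `ptilde i := ∑_{j ≥ i} p j` is the paper's `p̃_{i+1}`, and
`Y 0 ≡ 0`.  Then
`σ_{Σ,∞}² = ∑_i (Var(Y − Y_{i−1}) − Var(Y − Y_i))/p̃_i` equals
`Var(Z_Σ⁽¹⁾) − ∑_i (E Y − E Y_i)² (1/p̃_{i+1} − 1/p̃_i)`, where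
`Var(Z_Σ⁽¹⁾) = ∑_i (E[(Y_{i−1} − Y)²] − E[(Y_i − Y)²])/p̃_i − (E Y)²`, and each term of
the subtracted sum is nonnegative. -/
theorem sigma_infty_vs_coupled_sum_variance
    {Ω : Type*} [MeasurableSpace Ω] (μ : Measure Ω) [IsProbabilityMeasure μ]
    (Ytarget : Ω → ℝ) (Y : ℕ → Ω → ℝ) (p : ℕ → ℝ)
    (hYt : MemLp Ytarget 2 μ) (hYi : ∀ i, MemLp (Y i) 2 μ)
    (hYmeas : ∀ i, Measurable (Y i))
    (hY0 : Y 0 = fun _ => 0)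
    (hp : ∀ i, 0 < p i) (hp1 : ∑' i, p i = 1)
    (hptail : ∀ i, 0 < ∑' j : ℕ, p (i + j))
    (hsum : Summable (fun i =>
      (∫ ω, (Y i ω - Ytarget ω) ^ 2 ∂μ) / ∑' j : ℕ, p (i + j))) :
    (∑' i, (variance (fun ω => Ytarget ω - Y i ω) μ
          - variance (fun ω => Ytarget ω - Y (i + 1) ω) μ) / ∑' j : ℕ, p (i + j))
        = ((∑' i, ((∫ ω, (Y i ω - Ytarget ω) ^ 2 ∂μ)
              - ∫ ω, (Y (i + 1) ω - Ytarget ω) ^ 2 ∂μ) / ∑' j : ℕ, p (i + j))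
            - (∫ ω, Ytarget ω ∂μ) ^ 2)
          - ∑' i, ((∫ ω, Ytarget ω ∂μ) - ∫ ω, Y (i + 1) ω ∂μ) ^ 2
              * (1 / (∑' j : ℕ, p (i + 1 + j)) - 1 / ∑' j : ℕ, p (i + j)) ∧
      ∀ i, 0 ≤ ((∫ ω, Ytarget ω ∂μ) - ∫ ω, Y (i + 1) ω ∂μ) ^ 2
          * (1 / (∑' j : ℕ, p (i + 1 + j)) - 1 / ∑' j : ℕ, p (i + j)) :=
  sigma_infty_vs_coupled_sum_variance_general μ Ytarget Y p hYt hYi hY0 hp hp1 hptail hsum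
end

section
/- Suppose (Δ_i)_{i≥1} are integrable, (Δ_i^{(j)}) are copies with the property that for σ-algebras (F_i)_{i≥0} and nonnegative integer random variables N_i with E[N_i | F_{i−1}] ∈ (0,∞) a.s., one has E[Δ_i^{(j)} 1{j ≤ N_i} | F_{i−1}] = (E[Y_i] − E[Y_{i−1}]) P(j ≤ N_i | F_{i−1}) a.s., and E[|Δ_i^{(j)}| 1{j ≤ N_i} | F_{i−1}] ≤ C_i P(j ≤ N_i | F_{i−1}) with c_i = E[C_i] < ∞. Then Z_m := ∑_{i=1}^m (E[N_i | F_{i−1}])^{-1} ∑_{j≥1} Δ_i^{(j)} 1{j ≤ N_i} satisfies E[Z_m] = E[Y_m]. If moreover ∑_i c_i < ∞ and ∑_i N_i < ∞ a.s., then Z := lim_{m→∞} Z_m exists a.s. and E[Z] = E[Y]. -/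
open MeasureTheory ProbabilityTheory Filter

/-!
Write `g = E[N | F]` and `P j = P(j < N | F)` on one level. Since `∑_j 1{j < N} = N`, conditional
monotone convergence gives `∑_j P j = g`, so the `F`-measurable weights `P j / g` sum to one.
Pulling the unbounded `F`-measurable factor `g⁻¹` out of the conditional expectation (in `ℝ≥0∞`,
where no integrability is needed) turns the consistency hypothesis into
`E[g⁻¹ ∑_j Δ^{(j)} 1{j < N}] = (E[Y_{i+1}] - E[Y_i]) ∑_j E[P j / g] = E[Y_{i+1}] - E[Y_i]`,
and the domination hypothesis into `E|g⁻¹ ∑_j Δ^{(j)} 1{j < N}| ≤ E[C]`. The levels telescope to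
`E[Y_m]`; if `∑ c_i < ∞` they are summable in `L¹`, and if only finitely many `N_i` are nonzero
then `Z` is a.e. a finite sum, so `E[Z] = lim E[Y_m] = E[Y]`.
-/

/-- The partial-sum estimator of the dependent-randomisation scheme:
`Z_m = ∑_{i<m} (E[N i | F i])⁻¹ ∑_{j≥1} Δ i^{(j)} 1{j ≤ N i}`
(Lean indexing: level `i` corresponds to the paper's level `i+1`, `F i` to the
paper's `F_{i−1}`, and `j < N i ω` to the paper's `j ≤ N_i`). -/
noncomputable def Zdep {Ω : Type*} {mΩ : MeasurableSpace Ω} (μ : Measure Ω)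
    (F : ℕ → MeasurableSpace Ω) (Δc : ℕ → ℕ → Ω → ℝ) (N : ℕ → Ω → ℕ) (m : ℕ) :
    Ω → ℝ := fun ω =>
  ∑ i ∈ Finset.range m, ((μ[fun ω' => (N i ω' : ℝ)|F i]) ω)⁻¹
    * ∑' j : ℕ, if j < N i ω then Δc i j ω else 0

open scoped ENNReal

section

variable {Ω : Type*} {F mΩ : MeasurableSpace Ω} {μ : Measure Ω}

theorem lintegral_mul_condLExp (hF : F ≤ mΩ) [SigmaFinite (μ.trim hF)] {h X : Ω → ℝ≥0∞}
    (hh : Measurable[F] h) (hX : AEMeasurable X μ) :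
    ∫⁻ ω, h ω * μ⁻[X|F] ω ∂μ = ∫⁻ ω, h ω * X ω ∂μ := by
  have hdensity (Y : Ω → ℝ≥0∞) (hY : AEMeasurable Y μ) :
      ∫⁻ ω, h ω * Y ω ∂μ = ∫⁻ ω, h ω ∂(μ.withDensity Y).trim hF := by
    rw [lintegral_trim hF hh,
      lintegral_withDensity_eq_lintegral_mul₀ hY (hh.mono hF le_rfl).aemeasurable]
    simp only [Pi.mul_apply, mul_comm]
  have htrim : (μ.withDensity μ⁻[X|F]).trim hF = (μ.withDensity X).trim hF := by
    refine @Measure.ext _ F _ _ fun s hs => ?_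
    rw [trim_measurableSet_eq hF hs, trim_measurableSet_eq hF hs,
      withDensity_apply _ (hF _ hs), withDensity_apply _ (hF _ hs),
      setLIntegral_condLExp hF μ X hs]
  rw [hdensity _ (measurable_condLExp' F μ X).aemeasurable, hdensity X hX, htrim]

theorem hasSum_of_tsum_ofReal_eq {ι : Type*} {a : ι → ℝ} {b : ℝ} (ha : ∀ j, 0 ≤ a j)
    (hb : 0 ≤ b) (h : ∑' j, ENNReal.ofReal (a j) = ENNReal.ofReal b) : HasSum a b := by
  have hs : Summable a := (ENNReal.summable_toReal (h ▸ ENNReal.ofReal_ne_top)).congr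
    fun j => ENNReal.toReal_ofReal (ha j)
  rw [← ENNReal.ofReal_tsum_of_nonneg ha hs,
    ENNReal.ofReal_eq_ofReal_iff (tsum_nonneg ha) hb] at h
  exact h ▸ hs.hasSum

theorem ae_hasSum_condExp {ι : Type*} [Countable ι] {f : ι → Ω → ℝ} {s : Ω → ℝ}
    (hf : ∀ j, Integrable (f j) μ) (hf0 : ∀ j, 0 ≤ᵐ[μ] f j) (hs : Integrable s μ)
    (hfs : ∀ᵐ ω ∂μ, HasSum (f · ω) (s ω)) :
    ∀ᵐ ω ∂μ, HasSum (fun j => μ[f j|F] ω) (μ[s|F] ω) := by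
  have hs0 : 0 ≤ᵐ[μ] s := by
    filter_upwards [hfs, ae_all_iff.2 hf0] with ω h h0 using h.nonneg h0
  have hsum : (∑' j, fun ω => ENNReal.ofReal (f j ω)) =ᵐ[μ] fun ω => ENNReal.ofReal (s ω) := by
    filter_upwards [hfs, ae_all_iff.2 hf0] with ω h h0
    rw [ENNReal.tsum_apply, ← h.tsum_eq, ENNReal.ofReal_tsum_of_nonneg h0 h.summable]
  filter_upwards [condLExp_tsum F (fun j => (hf j).aemeasurable.ennreal_ofReal),
    condLExp_congr_ae (mΩ := F) hsum, condLExp_ofReal F hs hs0,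
    ae_all_iff.2 fun j => condLExp_ofReal F (hf j) (hf0 j),
    ae_all_iff.2 fun j => condExp_nonneg (m := F) (hf0 j), condExp_nonneg (m := F) hs0]
    with ω htsum hcongr hs' hf' hf0' hs0'
  refine hasSum_of_tsum_ofReal_eq hf0' hs0' ?_
  rw [← hs', ← hcongr, htsum, ENNReal.tsum_apply]
  exact tsum_congr fun j => (hf' j).symm

theorem integrable_tsum_of_tsum_lintegral_enorm_ne_top {E : Type*} [NormedAddCommGroup E]
    [CompleteSpace E] {f : ℕ → Ω → E} (hf : ∀ j, AEStronglyMeasurable (f j) μ)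
    (h : ∑' j, ∫⁻ ω, ‖f j ω‖ₑ ∂μ ≠ ∞) : Integrable (fun ω => ∑' j, f j ω) μ := by
  have hlint : ∫⁻ ω, ∑' j, ‖f j ω‖ₑ ∂μ = ∑' j, ∫⁻ ω, ‖f j ω‖ₑ ∂μ :=
    lintegral_tsum fun j => (hf j).enorm
  have hsum : ∀ᵐ ω ∂μ, Summable (f · ω) := by
    filter_upwards [ae_lt_top' (AEMeasurable.tsum fun j => (hf j).enorm) (hlint ▸ h)] with ω hω
    exact (tsum_enorm_ne_top_iff_summable_norm.1 hω.ne).of_norm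
  refine ⟨aestronglyMeasurable_of_tendsto_ae (atTop : Filter ℕ)
    (fun k => Finset.aestronglyMeasurable_sum (Finset.range k) fun j _ => hf j)
    (hsum.mono fun ω hω => ?_), ?_⟩
  · simpa only [Finset.sum_apply] using hω.hasSum.tendsto_sum_nat
  · exact (lintegral_mono fun ω => enorm_tsum_le_tsum_enorm).trans_lt (hlint ▸ h.lt_top)

theorem hasSum_ite_lt (n : ℕ) : HasSum (fun j : ℕ => if j < n then (1 : ℝ) else 0) n := by
  have h := hasSum_sum_of_ne_finset_zero (f := fun j : ℕ => if j < n then (1 : ℝ) else 0)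
    (s := Finset.range n) (L := .unconditional ℕ) fun j hj => if_neg (by simpa using hj)
  rwa [Finset.sum_ite_of_true fun j hj => Finset.mem_range.1 hj, Finset.sum_const,
    Finset.card_range, nsmul_one] at h

theorem stronglyMeasurable_inv_condExp (f : Ω → ℝ) :
    StronglyMeasurable[F] fun ω => (μ[f|F] ω)⁻¹ :=
  (measurable_inv.comp stronglyMeasurable_condExp.measurable).stronglyMeasurable

section Level

variable {N : Ω → ℕ} {X : ℕ → Ω → ℝ} {C : Ω → ℝ}

theorem integrable_ite_lt [IsFiniteMeasure μ] (hN : Measurable N) (j : ℕ) :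
    Integrable (fun ω => if j < N ω then (1 : ℝ) else 0) μ :=
  Integrable.of_bound
    (measurable_const.ite (measurableSet_lt measurable_const hN)
      measurable_const).aestronglyMeasurable 1
    (ae_of_all μ fun ω => by split_ifs <;> simp)

theorem ae_hasSum_condExp_ite_lt [IsFiniteMeasure μ] (hN : Measurable N)
    (hNint : Integrable (fun ω => (N ω : ℝ)) μ) :
    ∀ᵐ ω ∂μ, HasSum (fun j => μ[fun ω => if j < N ω then (1 : ℝ) else 0|F] ω)
      (μ[fun ω => (N ω : ℝ)|F] ω) :=
  ae_hasSum_condExp (integrable_ite_lt hN)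
    (fun j => ae_of_all μ fun ω => by positivity) hNint
    (ae_of_all μ fun ω => hasSum_ite_lt (N ω))

theorem ae_nonneg_of_condExp_abs_le_mul [IsFiniteMeasure μ] (hN : Measurable N)
    (hNint : Integrable (fun ω => (N ω : ℝ)) μ)
    (hNpos : ∀ᵐ ω ∂μ, 0 < μ[fun ω => (N ω : ℝ)|F] ω)
    (hXC : ∀ j, ∀ᵐ ω ∂μ, μ[(fun ω => |X j ω|)|F] ω
      ≤ C ω * μ[fun ω => if j < N ω then (1 : ℝ) else 0|F] ω) :
    0 ≤ᵐ[μ] C := by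
  filter_upwards [hNpos, ae_hasSum_condExp_ite_lt hN hNint, ae_all_iff.2 hXC,
    ae_all_iff.2 fun j => condExp_nonneg (m := F) (f := fun ω => |X j ω|)
      (ae_of_all μ fun ω => abs_nonneg (X j ω))]
    with ω hg hsum hXC hX0
  by_contra! hC
  exact hg.not_ge <| hsum.nonpos fun j => nonpos_of_mul_nonneg_right ((hX0 j).trans (hXC j)) hC

theorem lintegral_enorm_mul_le_of_condExp_abs_le (hF : F ≤ mΩ) [SigmaFinite (μ.trim hF)]
    {w Y Q : Ω → ℝ} (hw : StronglyMeasurable[F] w) (hY : Integrable Y μ)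
    (hYQ : ∀ᵐ ω ∂μ, μ[(fun ω => |Y ω|)|F] ω ≤ Q ω) :
    ∫⁻ ω, ‖w ω * Y ω‖ₑ ∂μ ≤ ∫⁻ ω, ‖w ω * Q ω‖ₑ ∂μ := by
  calc ∫⁻ ω, ‖w ω * Y ω‖ₑ ∂μ = ∫⁻ ω, ‖w ω‖ₑ * ‖|Y ω|‖ₑ ∂μ := by
        simp only [enorm_mul, Real.enorm_abs]
    _ = ∫⁻ ω, ‖w ω‖ₑ * μ⁻[fun ω => ‖|Y ω|‖ₑ|F] ω ∂μ :=
        (lintegral_mul_condLExp hF (measurable_enorm.comp hw.measurable)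
          hY.abs.aestronglyMeasurable.enorm).symm
    _ = ∫⁻ ω, ‖w ω‖ₑ * ‖μ[(fun ω => |Y ω|)|F] ω‖ₑ ∂μ := by
        refine lintegral_congr_ae ?_
        filter_upwards [condLExp_enorm F hY.abs (ae_of_all μ fun ω => abs_nonneg _)] with ω h
        rw [h]
    _ ≤ ∫⁻ ω, ‖w ω * Q ω‖ₑ ∂μ := by
        refine lintegral_mono_ae ?_
        filter_upwards [hYQ, condExp_nonneg (m := F) (f := fun ω => |Y ω|)
          (ae_of_all μ fun ω => abs_nonneg (Y ω))] with ω h h0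
        rw [enorm_mul]
        gcongr ‖_‖ₑ * ?_
        rw [Real.enorm_of_nonneg h0, Real.enorm_eq_ofReal_abs]
        exact ENNReal.ofReal_le_ofReal (h.trans (le_abs_self _))

theorem tsum_lintegral_enorm_inv_condExp_mul_le (hF : F ≤ mΩ) [IsFiniteMeasure μ]
    (hN : Measurable N) (hNint : Integrable (fun ω => (N ω : ℝ)) μ)
    (hNpos : ∀ᵐ ω ∂μ, 0 < μ[fun ω => (N ω : ℝ)|F] ω) (hX : ∀ j, Integrable (X j) μ)
    (hC : AEStronglyMeasurable C μ)
    (hXC : ∀ j, ∀ᵐ ω ∂μ, μ[(fun ω => |X j ω|)|F] ω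
      ≤ C ω * μ[fun ω => if j < N ω then (1 : ℝ) else 0|F] ω) :
    ∑' j, ∫⁻ ω, ‖(μ[fun ω => (N ω : ℝ)|F] ω)⁻¹ * X j ω‖ₑ ∂μ ≤ ∫⁻ ω, ‖C ω‖ₑ ∂μ := by
  set g := μ[fun ω => (N ω : ℝ)|F]
  set P := fun j => μ[fun ω => if j < N ω then (1 : ℝ) else 0|F]
  have hgF := stronglyMeasurable_inv_condExp (μ := μ) (F := F) fun ω => (N ω : ℝ)
  calc ∑' j, ∫⁻ ω, ‖(g ω)⁻¹ * X j ω‖ₑ ∂μ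
      ≤ ∑' j, ∫⁻ ω, ‖(g ω)⁻¹ * (C ω * P j ω)‖ₑ ∂μ := ENNReal.tsum_le_tsum fun j =>
        lintegral_enorm_mul_le_of_condExp_abs_le hF hgF (hX j) (hXC j)
    _ = ∫⁻ ω, ∑' j, ‖(g ω)⁻¹ * (C ω * P j ω)‖ₑ ∂μ := (lintegral_tsum fun j =>
        ((hgF.mono hF).aestronglyMeasurable.mul (hC.mul integrable_condExp.1)).enorm).symm
    _ = ∫⁻ ω, ‖C ω‖ₑ ∂μ := by
        refine lintegral_congr_ae ?_
        filter_upwards [hNpos, ae_hasSum_condExp_ite_lt hN hNint,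
          ae_all_iff.2 fun j => condExp_nonneg (m := F)
            (f := fun ω => if j < N ω then (1 : ℝ) else 0)
            (ae_of_all μ fun ω => by positivity)] with ω hg hsum hP0
        have hPsum : ∑' j, ‖P j ω‖ₑ = ‖g ω‖ₑ := by
          rw [tsum_congr fun j => Real.enorm_of_nonneg (hP0 j),
            ← ENNReal.ofReal_tsum_of_nonneg hP0 hsum.summable, hsum.tsum_eq,
            Real.enorm_of_nonneg hg.le]
        simp only [enorm_mul]
        rw [ENNReal.tsum_mul_left, ENNReal.tsum_mul_left, hPsum, ← enorm_mul, ← enorm_mul]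
        congr 1
        field_simp

theorem integrable_inv_condExp_mul_tsum (hF : F ≤ mΩ) [IsFiniteMeasure μ]
    (hN : Measurable N) (hNint : Integrable (fun ω => (N ω : ℝ)) μ)
    (hNpos : ∀ᵐ ω ∂μ, 0 < μ[fun ω => (N ω : ℝ)|F] ω) (hX : ∀ j, Integrable (X j) μ)
    (hC : Integrable C μ)
    (hXC : ∀ j, ∀ᵐ ω ∂μ, μ[(fun ω => |X j ω|)|F] ω
      ≤ C ω * μ[fun ω => if j < N ω then (1 : ℝ) else 0|F] ω) :
    Integrable (fun ω => (μ[fun ω => (N ω : ℝ)|F] ω)⁻¹ * ∑' j, X j ω) μ := by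
  simp_rw [← tsum_mul_left]
  exact integrable_tsum_of_tsum_lintegral_enorm_ne_top
    (fun j => integrable_condExp.1.aemeasurable.inv.aestronglyMeasurable.mul (hX j).1)
    ((tsum_lintegral_enorm_inv_condExp_mul_le hF hN hNint hNpos hX hC.1 hXC).trans_lt hC.2).ne

theorem hasSum_integral_inv_condExp_mul_condExp_ite_lt (hF : F ≤ mΩ) [IsProbabilityMeasure μ]
    (hN : Measurable N) (hNint : Integrable (fun ω => (N ω : ℝ)) μ)
    (hNpos : ∀ᵐ ω ∂μ, 0 < μ[fun ω => (N ω : ℝ)|F] ω) :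
    HasSum (fun j => ∫ ω, (μ[fun ω => (N ω : ℝ)|F] ω)⁻¹
      * μ[fun ω => if j < N ω then (1 : ℝ) else 0|F] ω ∂μ) 1 := by
  set g := μ[fun ω => (N ω : ℝ)|F]
  set P := fun j => μ[fun ω => if j < N ω then (1 : ℝ) else 0|F]
  have hsum : ∀ᵐ ω ∂μ, HasSum (fun j => (g ω)⁻¹ * P j ω) 1 := by
    filter_upwards [hNpos, ae_hasSum_condExp_ite_lt (F := F) hN hNint] with ω hg hsum
    have := hsum.mul_left (g ω)⁻¹
    rwa [inv_mul_cancel₀ hg.ne'] at this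
  have hnorm (j : ℕ) : ∀ᵐ ω ∂μ, ‖(g ω)⁻¹ * P j ω‖ ≤ (g ω)⁻¹ * P j ω := by
    filter_upwards [hNpos, condExp_nonneg (m := F)
      (f := fun ω => if j < N ω then (1 : ℝ) else 0) (ae_of_all μ fun ω => by positivity)]
      with ω hg hP0
    exact (Real.norm_of_nonneg (mul_nonneg (inv_nonneg.2 hg.le) hP0)).le
  simpa using hasSum_integral_of_dominated_convergence (fun j ω => (g ω)⁻¹ * P j ω)
    (fun j => ((stronglyMeasurable_inv_condExp _).mono hF).aestronglyMeasurable.mul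
      integrable_condExp.1) hnorm (hsum.mono fun ω h => h.summable)
    ((integrable_const 1).congr (hsum.mono fun ω h => h.tsum_eq.symm)) hsum

theorem integral_inv_condExp_mul_tsum (hF : F ≤ mΩ) [IsProbabilityMeasure μ]
    (hN : Measurable N) (hNint : Integrable (fun ω => (N ω : ℝ)) μ)
    (hNpos : ∀ᵐ ω ∂μ, 0 < μ[fun ω => (N ω : ℝ)|F] ω) (hX : ∀ j, Integrable (X j) μ) {d : ℝ}
    (hXd : ∀ j, μ[X j|F] =ᵐ[μ] fun ω => d * μ[fun ω => if j < N ω then (1 : ℝ) else 0|F] ω)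
    (hC : Integrable C μ)
    (hXC : ∀ j, ∀ᵐ ω ∂μ, μ[(fun ω => |X j ω|)|F] ω
      ≤ C ω * μ[fun ω => if j < N ω then (1 : ℝ) else 0|F] ω) :
    ∫ ω, (μ[fun ω => (N ω : ℝ)|F] ω)⁻¹ * ∑' j, X j ω ∂μ = d := by
  have hfin := ((tsum_lintegral_enorm_inv_condExp_mul_le hF hN hNint hNpos hX hC.1 hXC).trans_lt
    hC.2).ne
  set g := μ[fun ω => (N ω : ℝ)|F]
  set P := fun j => μ[fun ω => if j < N ω then (1 : ℝ) else 0|F]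
  have hgF := stronglyMeasurable_inv_condExp (μ := μ) (F := F) fun ω => (N ω : ℝ)
  have hint (j : ℕ) : Integrable (fun ω => (g ω)⁻¹ * X j ω) μ :=
    ⟨(hgF.mono hF).aestronglyMeasurable.mul (hX j).1,
      (ENNReal.le_tsum j).trans_lt hfin.lt_top⟩
  have hterm (j : ℕ) : ∫ ω, (g ω)⁻¹ * X j ω ∂μ = d * ∫ ω, (g ω)⁻¹ * P j ω ∂μ := by
    calc ∫ ω, (g ω)⁻¹ * X j ω ∂μ = ∫ ω, μ[fun ω => (g ω)⁻¹ * X j ω|F] ω ∂μ :=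
          (integral_condExp hF).symm
      _ = ∫ ω, (g ω)⁻¹ * μ[X j|F] ω ∂μ :=
          integral_congr_ae (condExp_mul_of_stronglyMeasurable_left hgF (hint j) (hX j))
      _ = ∫ ω, d * ((g ω)⁻¹ * P j ω) ∂μ := by
          refine integral_congr_ae ?_
          filter_upwards [hXd j] with ω h
          rw [h, mul_left_comm]
      _ = d * ∫ ω, (g ω)⁻¹ * P j ω ∂μ := integral_const_mul _ _
  calc ∫ ω, (g ω)⁻¹ * ∑' j, X j ω ∂μ = ∫ ω, ∑' j, (g ω)⁻¹ * X j ω ∂μ := by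
        simp_rw [tsum_mul_left]
    _ = ∑' j, ∫ ω, (g ω)⁻¹ * X j ω ∂μ := integral_tsum (fun j => (hint j).1) hfin
    _ = d := by
        rw [tsum_congr hterm, tsum_mul_left,
          (hasSum_integral_inv_condExp_mul_condExp_ite_lt hF hN hNint hNpos).tsum_eq, mul_one]

theorem integral_abs_inv_condExp_mul_tsum_le (hF : F ≤ mΩ) [IsFiniteMeasure μ]
    (hN : Measurable N) (hNint : Integrable (fun ω => (N ω : ℝ)) μ)
    (hNpos : ∀ᵐ ω ∂μ, 0 < μ[fun ω => (N ω : ℝ)|F] ω) (hX : ∀ j, Integrable (X j) μ)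
    (hC : Integrable C μ)
    (hXC : ∀ j, ∀ᵐ ω ∂μ, μ[(fun ω => |X j ω|)|F] ω
      ≤ C ω * μ[fun ω => if j < N ω then (1 : ℝ) else 0|F] ω) :
    ∫ ω, |(μ[fun ω => (N ω : ℝ)|F] ω)⁻¹ * ∑' j, X j ω| ∂μ ≤ ∫ ω, C ω ∂μ := by
  set g := μ[fun ω => (N ω : ℝ)|F]
  have hle : ∫⁻ ω, ‖(g ω)⁻¹ * ∑' j, X j ω‖ₑ ∂μ ≤ ∫⁻ ω, ‖C ω‖ₑ ∂μ := by
    calc ∫⁻ ω, ‖(g ω)⁻¹ * ∑' j, X j ω‖ₑ ∂μ ≤ ∫⁻ ω, ∑' j, ‖(g ω)⁻¹ * X j ω‖ₑ ∂μ := by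
          simp_rw [← tsum_mul_left]
          exact lintegral_mono fun ω => enorm_tsum_le_tsum_enorm
      _ = ∑' j, ∫⁻ ω, ‖(g ω)⁻¹ * X j ω‖ₑ ∂μ := lintegral_tsum fun j =>
          (integrable_condExp.1.aemeasurable.inv.mul (hX j).1.aemeasurable).enorm
      _ ≤ ∫⁻ ω, ‖C ω‖ₑ ∂μ :=
          tsum_lintegral_enorm_inv_condExp_mul_le hF hN hNint hNpos hX hC.1 hXC
  have hC0 := ae_nonneg_of_condExp_abs_le_mul hN hNint hNpos hXC
  rw [integral_congr_ae (hC0.mono fun ω h => (Real.norm_of_nonneg h).symm)]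
  simp_rw [← Real.norm_eq_abs]
  rw [integral_norm_eq_lintegral_enorm
      (integrable_inv_condExp_mul_tsum hF hN hNint hNpos hX hC hXC).1,
    integral_norm_eq_lintegral_enorm hC.1]
  exact ENNReal.toReal_mono hC.2.ne hle

end Level

end

theorem dependent_randomisation_unbiased_general
    {Ω : Type*} {mΩ : MeasurableSpace Ω} (μ : Measure Ω) [IsProbabilityMeasure μ]
    (Ytarget : Ω → ℝ) (EY : ℕ → ℝ) (Δc : ℕ → ℕ → Ω → ℝ) (N : ℕ → Ω → ℕ)
    (F : ℕ → MeasurableSpace Ω) (C : ℕ → Ω → ℝ)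
    (hF : ∀ i, F i ≤ mΩ)
    (hEY0 : EY 0 = 0)
    (hEYlim : Tendsto EY atTop (nhds (∫ ω, Ytarget ω ∂μ)))
    (hNmeas : ∀ i, Measurable (N i))
    (hNint : ∀ i, Integrable (fun ω => (N i ω : ℝ)) μ)
    (hΔcint : ∀ i j, Integrable (fun ω => if j < N i ω then Δc i j ω else 0) μ)
    (hNpos : ∀ i, ∀ᵐ ω ∂μ, 0 < (μ[fun ω' => (N i ω' : ℝ)|F i]) ω)
    (hconsist : ∀ i j,
      (μ[fun ω => if j < N i ω then Δc i j ω else 0|F i])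
        =ᵐ[μ] fun ω => (EY (i + 1) - EY i)
          * (μ[fun ω' => if j < N i ω' then (1 : ℝ) else 0|F i]) ω)
    (hCint : ∀ i, Integrable (C i) μ)
    (hbound : ∀ i j, ∀ᵐ ω ∂μ,
      (μ[fun ω' => if j < N i ω' then |Δc i j ω'| else 0|F i]) ω
        ≤ C i ω * (μ[fun ω' => if j < N i ω' then (1 : ℝ) else 0|F i]) ω) :
    (∀ m, ∫ ω, Zdep μ F Δc N m ω ∂μ = EY m) ∧
      (Summable (fun i => ∫ ω, C i ω ∂μ) →
        (∀ᵐ ω ∂μ, {i | N i ω ≠ 0}.Finite) →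
        ∃ Z : Ω → ℝ,
          (∀ᵐ ω ∂μ, Tendsto (fun m => Zdep μ F Δc N m ω) atTop (nhds (Z ω))) ∧
          ∫ ω, Z ω ∂μ = ∫ ω, Ytarget ω ∂μ) := by
  set S : ℕ → Ω → ℝ := fun i ω => (μ[fun ω' => (N i ω' : ℝ)|F i] ω)⁻¹
    * ∑' j : ℕ, if j < N i ω then Δc i j ω else 0
  have hXC (i j : ℕ) : ∀ᵐ ω ∂μ, μ[(fun ω => |if j < N i ω then Δc i j ω else 0|)|F i] ω
      ≤ C i ω * μ[fun ω => if j < N i ω then (1 : ℝ) else 0|F i] ω := by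
    simpa only [apply_ite abs, abs_zero] using hbound i j
  have hSint (i : ℕ) : Integrable (S i) μ := integrable_inv_condExp_mul_tsum (hF i) (hNmeas i)
    (hNint i) (hNpos i) (hΔcint i) (hCint i) (hXC i)
  have hSabs (i : ℕ) : ∫ ω, |S i ω| ∂μ ≤ ∫ ω, C i ω ∂μ := integral_abs_inv_condExp_mul_tsum_le
    (hF i) (hNmeas i) (hNint i) (hNpos i) (hΔcint i) (hCint i) (hXC i)
  have htelescope (m : ℕ) : ∑ i ∈ Finset.range m, ∫ ω, S i ω ∂μ = EY m := by
    rw [Finset.sum_congr rfl fun i _ => integral_inv_condExp_mul_tsum (hF i) (hNmeas i)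
      (hNint i) (hNpos i) (hΔcint i) (hconsist i) (hCint i) (hXC i),
      Finset.sum_range_sub, hEY0, sub_zero]
  refine ⟨fun m => (integral_finsetSum _ fun i _ => hSint i).trans (htelescope m),
    fun hCsum hNfin => ⟨fun ω => ∑' i, S i ω, ?_, ?_⟩⟩
  · filter_upwards [hNfin] with ω hfin
    refine (summable_of_ne_finset_zero (s := hfin.toFinset) fun i hi => ?_).hasSum.tendsto_sum_nat
    have : N i ω = 0 := by simpa using hi
    simp [this]
  · have hsum := hasSum_integral_of_summable_integral_norm hSint
      (hCsum.of_nonneg_of_le (fun i => integral_nonneg fun ω => norm_nonneg _) hSabs)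
    exact tendsto_nhds_unique hsum.tendsto_sum_nat (by simpa only [htelescope] using hEYlim)

/-- Dependent randomisation / stopping-time unbiasedness (Theorem 7(i) of the paper):
under the conditional consistency and domination conditions, `E[Z_m] = E[Y_m]`; and if
moreover `∑ c_i < ∞` and `∑ N_i < ∞` a.s., then `Z = lim Z_m` exists a.s. and
`E[Z] = E[Y]`. -/
theorem dependent_randomisation_unbiased
    {Ω : Type*} {mΩ : MeasurableSpace Ω} (μ : Measure Ω) [IsProbabilityMeasure μ]
    (Ytarget : Ω → ℝ) (EY : ℕ → ℝ) (Δc : ℕ → ℕ → Ω → ℝ) (N : ℕ → Ω → ℕ)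
    (F : ℕ → MeasurableSpace Ω) (C : ℕ → Ω → ℝ)
    (hF : ∀ i, F i ≤ mΩ)
    (hYint : Integrable Ytarget μ)
    (hEY0 : EY 0 = 0)
    (hEYlim : Tendsto EY atTop (nhds (∫ ω, Ytarget ω ∂μ)))
    (hΔcmeas : ∀ i j, Measurable (Δc i j))
    (hNmeas : ∀ i, Measurable (N i))
    (hNint : ∀ i, Integrable (fun ω => (N i ω : ℝ)) μ)
    (hΔcint : ∀ i j, Integrable (fun ω => if j < N i ω then Δc i j ω else 0) μ)
    (hNpos : ∀ i, ∀ᵐ ω ∂μ, 0 < (μ[fun ω' => (N i ω' : ℝ)|F i]) ω)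
    (hconsist : ∀ i j,
      (μ[fun ω => if j < N i ω then Δc i j ω else 0|F i])
        =ᵐ[μ] fun ω => (EY (i + 1) - EY i)
          * (μ[fun ω' => if j < N i ω' then (1 : ℝ) else 0|F i]) ω)
    (hCint : ∀ i, Integrable (C i) μ)
    (hbound : ∀ i j, ∀ᵐ ω ∂μ,
      (μ[fun ω' => if j < N i ω' then |Δc i j ω'| else 0|F i]) ω
        ≤ C i ω * (μ[fun ω' => if j < N i ω' then (1 : ℝ) else 0|F i]) ω) :
    (∀ m, ∫ ω, Zdep μ F Δc N m ω ∂μ = EY m) ∧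
      (Summable (fun i => ∫ ω, C i ω ∂μ) →
        (∀ᵐ ω ∂μ, {i | N i ω ≠ 0}.Finite) →
        ∃ Z : Ω → ℝ,
          (∀ᵐ ω ∂μ, Tendsto (fun m => Zdep μ F Δc N m ω) atTop (nhds (Z ω))) ∧
          ∫ ω, Z ω ∂μ = ∫ ω, Ytarget ω ∂μ) :=
  dependent_randomisation_unbiased_general μ Ytarget EY Δc N F C hF hEY0 hEYlim hNmeas hNint hΔcint
    hNpos hconsist hCint hbound
end
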